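/- Let P be an H-group and P' a sub-H-group. The following are equivalent: (i) for all g₁, g₂ ∈ P, the saturation of the product set (g₁P')(g₂P') equals the coset (g₁·g₂)P'; (ii) for all g ∈ P, the left coset gP' equals the right coset P'g. -/

import Mathlib

open ContinuousMap

universe u v

/-- An H-group: a pointed space with continuous multiplication, homotopy inverse and the
constant map as homotopy identity, satisfying the H-group axioms up to pointed homotopy. -/
structure HGroup (P : Type u) [TopologicalSpace P] where
  pt : P
  mul : C(P × P, P)
  inv : C(P, P)
  mul_pt : mul (pt, pt) = pt
  inv_pt : inv pt = pt
  left_id : HomotopicRel ⟨fun g => mul (pt, g), by fun_prop⟩ (ContinuousMap.id P) {pt}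
  right_id : HomotopicRel ⟨fun g => mul (g, pt), by fun_prop⟩ (ContinuousMap.id P) {pt}
  left_inv : HomotopicRel ⟨fun g => mul (inv g, g), by fun_prop⟩ (const P pt) {pt}
  right_inv : HomotopicRel ⟨fun g => mul (g, inv g), by fun_prop⟩ (const P pt) {pt}
  assoc : HomotopicRel ⟨fun p : P × P × P => mul (mul (p.1, p.2.1), p.2.2), by fun_prop⟩
      ⟨fun p : P × P × P => mul (p.1, mul (p.2.1, p.2.2)), by fun_prop⟩ {(pt, pt, pt)}

/-- `Jtn S g` : `g` homotopically belongs to `S`, i.e. there is a path in the ambient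
space from `g` to a point of `S`. -/
def Jtn {P : Type u} [TopologicalSpace P] (S : Set P) (g : P) : Prop := ∃ s ∈ S, Joined g s

/-- The class of `g` in `π₀`. -/
def pc {P : Type u} [TopologicalSpace P] (g : P) : ZerothHomotopy P :=
  Quotient.mk (pathSetoid P) g

namespace HGroup
variable {P : Type u} [TopologicalSpace P]

/-- The left coset `g·S = {g' | η(g)·g' ∈̃ S}`. -/
def lcoset (H : HGroup P) (g : P) (S : Set P) : Set P :=
  {g' | Jtn S (H.mul (H.inv g, g'))}

/-- The right coset `S·g = {g' | g'·η(g) ∈̃ S}`. -/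
def rcoset (H : HGroup P) (S : Set P) (g : P) : Set P :=
  {g' | Jtn S (H.mul (g', H.inv g))}

/-- The pointwise product of two subsets. -/
def mulSet (H : HGroup P) (A B : Set P) : Set P := {p | ∃ a ∈ A, ∃ b ∈ B, p = H.mul (a, b)}

end HGroup

/-- A subset is saturated if it is a union of path components of the ambient space. -/
def Saturated {P : Type u} [TopologicalSpace P] (A : Set P) : Prop :=
  ∀ x ∈ A, ∀ y, Joined x y → y ∈ A

/-- A sub-H-group: a pointed subspace which is itself an H-group such that the
inclusion is an H-homomorphism (via pointed homotopies). -/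
structure SubHGroup {P : Type u} [TopologicalSpace P] (H : HGroup P) where
  carrier : Set P
  struct : HGroup carrier
  pt_val : (struct.pt : P) = H.pt
  incl_mul : HomotopicRel
    ⟨fun p : carrier × carrier => (struct.mul p : P), by fun_prop⟩
    ⟨fun p : carrier × carrier => H.mul (p.1, p.2), by fun_prop⟩
    {(struct.pt, struct.pt)}
  incl_inv : HomotopicRel
    ⟨fun x : carrier => (struct.inv x : P), by fun_prop⟩
    ⟨fun x : carrier => H.inv x, by fun_prop⟩
    {struct.pt}

/-- A sub-H-group is normal if `g·n·g⁻¹` homotopically belongs to it for all `g`, `n`. -/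
def SubHGroup.Normal {P : Type u} [TopologicalSpace P] {H : HGroup P}
    (N : SubHGroup H) : Prop :=
  ∀ g : P, ∀ n ∈ N.carrier, Jtn N.carrier (H.mul (H.mul (g, n), H.inv g))

/-- The set of left cosets of `S` in `P`. -/
def Cosets {P : Type u} [TopologicalSpace P] (H : HGroup P) (S : Set P) :=
  {T : Set P // ∃ g : P, T = H.lcoset g S}

/-- The left coset of `S` represented by `g`, as an element of `Cosets H S`. -/
def cst {P : Type u} [TopologicalSpace P] (H : HGroup P) (S : Set P) (g : P) : Cosets H S :=
  ⟨H.lcoset g S, g, rfl⟩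

/-- The coset equivalence relation: `g₁ ∼ g₂` iff `g₁·η(g₂) ∈̃ S`. -/
def cosetRel {P : Type u} [TopologicalSpace P] (H : HGroup P) (S : Set P)
    (g₁ g₂ : P) : Prop :=
  Jtn S (H.mul (g₁, H.inv g₂))

/-!
`π₀` of an H-group is a group, and a sub-H-group `P'` maps onto a subgroup `N` of it. Every
set in the statement is the preimage under `P → π₀ P` of the corresponding pointwise set built
from `N`: `gP'` of `g • N`, `P'g` of `N • g`, and the saturation of `(g₁P')(g₂P')` of
`(g₁ • N) * (g₂ • N)`. As the projection is surjective, the theorem becomes the group-theoretic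
fact that both conditions characterise normality of `N`.
-/

open Pointwise MulOpposite

theorem Subgroup.smul_mul_smul_eq_mul_smul_iff_normal {G : Type*} [Group G] (N : Subgroup G) :
    (∀ a b : G, (a • (N : Set G)) * (b • (N : Set G)) = (a * b) • (N : Set G)) ↔ N.Normal := by
  constructor
  · refine fun h => ⟨fun n hn g => ?_⟩
    have hmem : g * n * g⁻¹ ∈ (g • (N : Set G)) * (g⁻¹ • (N : Set G)) :=
      ⟨g * n, ⟨n, hn, rfl⟩, g⁻¹ * 1, ⟨1, N.one_mem, rfl⟩, by group⟩
    rwa [h, mul_inv_cancel, one_smul] at hmem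
  · intro hN a b
    ext x
    simp only [Set.mem_mul, mem_leftCoset_iff]
    constructor
    · rintro ⟨y, hy, z, hz, rfl⟩
      -- `(a * b)⁻¹ * (y * z) = (b⁻¹ * (a⁻¹ * y) * b) * (b⁻¹ * z)`
      have hconj : b⁻¹ * (a⁻¹ * y) * b⁻¹⁻¹ ∈ N := hN.conj_mem _ hy b⁻¹
      simpa [mul_assoc] using N.mul_mem hconj hz
    · intro hx
      exact ⟨a, by simp [N.one_mem], a⁻¹ * x, by simpa [mul_assoc] using hx, by group⟩

theorem ContinuousMap.HomotopicRel.joined {X Y : Type*} [TopologicalSpace X] [TopologicalSpace Y]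
    {f g : C(X, Y)} {S : Set X} (h : f.HomotopicRel g S) (x : X) : Joined (f x) (g x) :=
  let ⟨F⟩ := h
  ⟨F.evalAt x⟩

namespace HGroup

variable {P : Type u} [TopologicalSpace P] (H : HGroup P)

/-- `π₀ P`, indexed by `H` so that it can carry the group structure induced by `H`. -/
def Pi0 (_H : HGroup P) : Type u := ZerothHomotopy P

def cls (g : P) : H.Pi0 := pc g

theorem joined_mul {a a' b b' : P} (ha : Joined a a') (hb : Joined b b') :
    Joined (H.mul (a, b)) (H.mul (a', b')) :=
  (ha.prod hb).map H.mul.continuous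

instance : Group H.Pi0 where
  mul := Quotient.map₂ (fun a b => H.mul (a, b)) fun _ _ ha _ _ hb => H.joined_mul ha hb
  one := H.cls H.pt
  inv := Quotient.map H.inv fun _ _ h => h.map H.inv.continuous
  mul_assoc a b c := Quotient.inductionOn₃ a b c fun x y z =>
    Quotient.sound (H.assoc.joined (x, y, z))
  one_mul a := Quotient.inductionOn a fun x => Quotient.sound (H.left_id.joined x)
  mul_one a := Quotient.inductionOn a fun x => Quotient.sound (H.right_id.joined x)
  inv_mul_cancel a := Quotient.inductionOn a fun x => Quotient.sound (H.left_inv.joined x)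

theorem cls_mul (a b : P) : H.cls (H.mul (a, b)) = H.cls a * H.cls b := rfl

theorem cls_inv (a : P) : H.cls (H.inv a) = (H.cls a)⁻¹ := rfl

theorem cls_surjective : Function.Surjective H.cls :=
  Quotient.mk_surjective

theorem cls_eq_cls_iff {a b : P} : H.cls a = H.cls b ↔ Joined a b :=
  Quotient.eq

theorem jtn_iff_cls_mem_image {S : Set P} {g : P} : Jtn S g ↔ H.cls g ∈ H.cls '' S := by
  simp only [Jtn, Set.mem_image, H.cls_eq_cls_iff]
  exact exists_congr fun _ => and_congr_right fun _ => ⟨Joined.symm, Joined.symm⟩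

theorem setOf_jtn_eq_preimage_image (S : Set P) : {p | Jtn S p} = H.cls ⁻¹' (H.cls '' S) :=
  Set.ext fun _ => H.jtn_iff_cls_mem_image

theorem lcoset_eq_preimage (g : P) (S : Set P) :
    H.lcoset g S = H.cls ⁻¹' (H.cls g • H.cls '' S) := by
  ext p
  rw [Set.mem_preimage, mem_leftCoset_iff, ← cls_inv, ← cls_mul]
  exact H.jtn_iff_cls_mem_image

theorem rcoset_eq_preimage (S : Set P) (g : P) :
    H.rcoset S g = H.cls ⁻¹' (op (H.cls g) • H.cls '' S) := by
  ext p
  rw [Set.mem_preimage, mem_rightCoset_iff, ← cls_inv, ← cls_mul]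
  exact H.jtn_iff_cls_mem_image

theorem image_cls_mulSet (A B : Set P) : H.cls '' H.mulSet A B = H.cls '' A * H.cls '' B := by
  ext x
  simp only [mulSet, Set.mem_image, Set.mem_mul, Set.mem_ofPred_eq]
  constructor
  · rintro ⟨_, ⟨a, ha, b, hb, rfl⟩, rfl⟩
    exact ⟨_, ⟨a, ha, rfl⟩, _, ⟨b, hb, rfl⟩, rfl⟩
  · rintro ⟨_, ⟨a, ha, rfl⟩, _, ⟨b, hb, rfl⟩, rfl⟩
    exact ⟨_, ⟨a, ha, b, hb, rfl⟩, rfl⟩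

theorem setOf_jtn_mulSet_lcoset (g₁ g₂ : P) (S : Set P) :
    {p | Jtn (H.mulSet (H.lcoset g₁ S) (H.lcoset g₂ S)) p} =
      H.cls ⁻¹' ((H.cls g₁ • H.cls '' S) * (H.cls g₂ • H.cls '' S)) := by
  rw [setOf_jtn_eq_preimage_image, image_cls_mulSet, lcoset_eq_preimage, lcoset_eq_preimage,
    Set.image_preimage_eq _ H.cls_surjective, Set.image_preimage_eq _ H.cls_surjective]

end HGroup

namespace SubHGroup

variable {P : Type u} [TopologicalSpace P] {H : HGroup P}

def pi0Subgroup (P' : SubHGroup H) : Subgroup H.Pi0 where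
  carrier := H.cls '' P'.carrier
  one_mem' := ⟨_, P'.struct.pt.2, congrArg H.cls P'.pt_val⟩
  mul_mem' := by
    rintro _ _ ⟨a, ha, rfl⟩ ⟨b, hb, rfl⟩
    exact ⟨_, (P'.struct.mul (⟨a, ha⟩, ⟨b, hb⟩)).2,
      H.cls_eq_cls_iff.2 (P'.incl_mul.joined (⟨a, ha⟩, ⟨b, hb⟩))⟩
  inv_mem' := by
    rintro _ ⟨a, ha, rfl⟩
    exact ⟨_, (P'.struct.inv ⟨a, ha⟩).2, H.cls_eq_cls_iff.2 (P'.incl_inv.joined ⟨a, ha⟩)⟩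

theorem coe_pi0Subgroup (P' : SubHGroup H) : (P'.pi0Subgroup : Set H.Pi0) = H.cls '' P'.carrier :=
  rfl

end SubHGroup

/-- For a sub-H-group `P'` of `P`, the saturation of `(g₁P')(g₂P')` equals `(g₁·g₂)P'`
for all `g₁, g₂` if and only if `gP' = P'g` for all `g`. -/
theorem stmt_8 {P : Type u} [TopologicalSpace P] (H : HGroup P) (P' : SubHGroup H) :
    (∀ g₁ g₂ : P,
        {p : P | Jtn (H.mulSet (H.lcoset g₁ P'.carrier) (H.lcoset g₂ P'.carrier)) p} =
          H.lcoset (H.mul (g₁, g₂)) P'.carrier) ↔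
    (∀ g : P, H.lcoset g P'.carrier = H.rcoset P'.carrier g) := by
  simp only [H.setOf_jtn_mulSet_lcoset]
  simp only [H.lcoset_eq_preimage, H.rcoset_eq_preimage, H.cls_mul,
    Set.preimage_eq_preimage H.cls_surjective, ← SubHGroup.coe_pi0Subgroup]
  exact H.cls_surjective.forall₂.symm.trans <|
    (Subgroup.smul_mul_smul_eq_mul_smul_iff_normal _).trans <|
      (normal_iff_eq_cosets _).trans H.cls_surjective.forall
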